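/- arXiv:1510.05774 — 2 statements merged into one kernel-verified Lean document; each statement's English description precedes it below -/
import Mathlib

section
/- Let A = (V, V0, V1, E, v_I) be an arena and w : E → ℤ a weight function. If Player 0 has a winning strategy σ for (A, AvgEnergy_L(w, t)) for some t ∈ ℕ, then there exist a capacity cap ∈ ℕ and a strategy σ' for Player 0 that is winning for (A, Energy_LU(w, cap)). -/
/-- An arena: a directed graph without terminal vertices, a set `V0` of Player 0's
vertices (Player 1 controls the complement), and an initial vertex. -/
structure Arena (V : Type) where
  V0 : Set V
  E : V → V → Prop
  vI : V
  succ : ∀ v, ∃ v', E v v'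

/-- A play: an infinite path starting in the initial vertex. -/
def Arena.Play {V : Type} (A : Arena V) (ρ : ℕ → V) : Prop :=
  ρ 0 = A.vI ∧ ∀ n, A.E (ρ n) (ρ (n + 1))

/-- The play prefix `ρ 0 ⋯ ρ n` as a list. -/
def prefixList {V : Type} (ρ : ℕ → V) (n : ℕ) : List V :=
  (List.range (n + 1)).map ρ

/-- A strategy for the player controlling the vertices in `p`. -/
def Arena.IsStrategy {V : Type} (A : Arena V) (p : Set V) (σ : List V → V) : Prop :=
  ∀ (h : List V) (v : V), v ∈ p → A.E v (σ (h ++ [v]))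

/-- Consistency of a play with a strategy of the player controlling `p`. -/
def Arena.ConsistentWith {V : Type} (A : Arena V) (p : Set V) (σ : List V → V) (ρ : ℕ → V) : Prop :=
  ∀ n, ρ n ∈ p → ρ (n + 1) = σ (prefixList ρ n)

/-- `σ` is a winning strategy for the player controlling `p` with objective `Obj`. -/
def Arena.WinningStrategy {V : Type} (A : Arena V) (p : Set V) (Obj : Set (ℕ → V))
    (σ : List V → V) : Prop :=
  A.IsStrategy p σ ∧ ∀ ρ, A.Play ρ → A.ConsistentWith p σ ρ → ρ ∈ Obj

/-- Player 0 wins the game `(A, Win)`. -/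
def Arena.Player0Wins {V : Type} (A : Arena V) (Win : Set (ℕ → V)) : Prop :=
  ∃ σ, A.WinningStrategy A.V0 Win σ

/-- `h` is a finite play prefix consistent with the strategy `σ` of the player controlling `p`. -/
def Arena.FinPrefix {V : Type} (A : Arena V) (p : Set V) (σ : List V → V) (h : List V) : Prop :=
  ∃ ρ n, A.Play ρ ∧ A.ConsistentWith p σ ρ ∧ h = prefixList ρ n

/-- A positional strategy only depends on the last vertex. -/
def Positional {X : Type} (σ : List X → X) : Prop :=
  ∀ (h : List X) (v : X), σ (h ++ [v]) = σ [v]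

/-- The energy level of the play prefix `ρ 0 ⋯ ρ n` is `EL w ρ n`:
the sum of the weights of its `n` edges. -/
def EL {V : Type} (w : V → V → ℤ) (ρ : ℕ → V) (n : ℕ) : ℤ :=
  ∑ i ∈ Finset.range n, w (ρ i) (ρ (i + 1))

/-- The energy level of a finite play prefix given as a list. -/
def ELl {V : Type} (w : V → V → ℤ) : List V → ℤ
  | [] => 0
  | [_] => 0
  | a :: b :: l => w a b + ELl w (b :: l)

/-- The average accumulated energy of the first `n` prefixes. -/
noncomputable def avgEL {V : Type} (w : V → V → ℤ) (ρ : ℕ → V) (n : ℕ) : ℝ :=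
  (∑ i ∈ Finset.range n, (EL w ρ i : ℝ)) / (n : ℝ)

/-- The lower-bounded energy objective. -/
def EnergyL {V : Type} (w : V → V → ℤ) : Set (ℕ → V) :=
  {ρ | ∀ n, 0 ≤ EL w ρ n}

/-- The lower- and upper-bounded energy objective. -/
def EnergyLU {V : Type} (w : V → V → ℤ) (cap : ℕ) : Set (ℕ → V) :=
  {ρ | ∀ n, 0 ≤ EL w ρ n ∧ EL w ρ n ≤ (cap : ℤ)}

/-- The average-energy objective: limsup of the averages is at most `t`. -/
def AvgE {V : Type} (w : V → V → ℤ) (t : ℝ) : Set (ℕ → V) :=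
  {ρ | Filter.limsup (fun n => (avgEL w ρ n : EReal)) Filter.atTop ≤ (t : EReal)}

/-- The lower-bounded average-energy objective. -/
def AvgEnergyL {V : Type} (w : V → V → ℤ) (t : ℝ) : Set (ℕ → V) :=
  EnergyL w ∩ AvgE w t

/-- The mean-payoff objective. -/
def MP {V : Type} (w : V → V → ℤ) (t : ℝ) : Set (ℕ → V) :=
  {ρ | Filter.limsup (fun n => (((EL w ρ n : ℝ) / (n : ℝ)) : EReal)) Filter.atTop ≤ (t : EReal)}

/-- A memory structure: initial memory state and update along edges. -/
structure Mem (V M : Type) where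
  mI : M
  upd : M → V → V → M

/-- Tracking the memory state along a play. -/
def Mem.track {V M : Type} (mem : Mem V M) (ρ : ℕ → V) : ℕ → M
  | 0 => mem.mI
  | n + 1 => mem.upd (Mem.track mem ρ n) (ρ n) (ρ (n + 1))

def Mem.runAux {V M : Type} (mem : Mem V M) : M → List V → M
  | m, [] => m
  | m, [_] => m
  | m, a :: b :: l => Mem.runAux mem (mem.upd m a b) (b :: l)

/-- `Upd⁺`: the memory state reached along a finite play prefix. -/
def Mem.run {V M : Type} (mem : Mem V M) (h : List V) : M :=
  Mem.runAux mem mem.mI h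

/-- The strategy `σ` is implemented by the memory structure `mem`
(via some next-move function). -/
def Arena.ImplementedBy {V M : Type} (A : Arena V) (mem : Mem V M) (σ : List V → V) : Prop :=
  ∃ nxt : V → M → V, ∀ (h : List V) (v : V), σ (h ++ [v]) = nxt v (mem.run (h ++ [v]))

/-- `σ` is a finite-state strategy of size `k`. -/
def Arena.FiniteStateOfSize {V : Type} (A : Arena V) (k : ℕ) (σ : List V → V) : Prop :=
  ∃ (M : Type) (inst : Fintype M) (mem : Mem V M),
    @Fintype.card M inst = k ∧ A.ImplementedBy mem σ

/-- The expanded arena `A × M`. -/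
def Arena.expand {V M : Type} (A : Arena V) (mem : Mem V M) : Arena (V × M) where
  V0 := {p | p.1 ∈ A.V0}
  E := fun p q => A.E p.1 q.1 ∧ q.2 = mem.upd p.2 p.1 q.1
  vI := (A.vI, mem.mI)
  succ := fun p => by
    obtain ⟨v', h⟩ := A.succ p.1
    exact ⟨(v', mem.upd p.2 p.1 v'), h, rfl⟩

/-- The extended play in `A × M` corresponding to a play in `A`. -/
def extendPlay {V M : Type} (mem : Mem V M) (ρ : ℕ → V) : ℕ → V × M :=
  fun n => (ρ n, Mem.track mem ρ n)

/-- `(A, Win) ≤_M (A × M, Win')`. -/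
def Reduces {V M : Type} (A : Arena V) (mem : Mem V M) (Win : Set (ℕ → V))
    (Win' : Set (ℕ → V × M)) : Prop :=
  ∀ ρ, A.Play ρ → (ρ ∈ Win ↔ extendPlay mem ρ ∈ Win')

/-- A recharge weight function (`none` is the recharge label `R`) assigns
non-positive weights to all (non-recharge) edges. -/
def RechargeWeights {V : Type} (A : Arena V) (w : V → V → Option ℤ) : Prop :=
  ∀ u v, A.E u v → ∀ k : ℤ, w u v = some k → k ≤ 0

/-- The recharge energy level of the prefix `ρ 0 ⋯ ρ n`: the capacity plus the
accumulated weight since the last `R`-edge. -/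
def ELcap {V : Type} (w : V → V → Option ℤ) (cap : ℕ) (ρ : ℕ → V) : ℕ → ℤ
  | 0 => (cap : ℤ)
  | n + 1 =>
    match w (ρ n) (ρ (n + 1)) with
    | none => (cap : ℤ)
    | some k => ELcap w cap ρ n + k

/-- The recharge objective. -/
def Recharge {V : Type} (w : V → V → Option ℤ) (cap : ℕ) : Set (ℕ → V) :=
  {ρ | ∀ n, 0 ≤ ELcap w cap ρ n}

/-- The average of the recharge energy levels of the first `n` prefixes. -/
noncomputable def avgELcap {V : Type} (w : V → V → Option ℤ) (cap : ℕ) (ρ : ℕ → V)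
    (n : ℕ) : ℝ :=
  (∑ i ∈ Finset.range n, (ELcap w cap ρ i : ℝ)) / (n : ℝ)

/-- The average-bounded recharge objective. -/
def AvgRecharge {V : Type} (w : V → V → Option ℤ) (cap : ℕ) (t : ℝ) : Set (ℕ → V) :=
  {ρ | Filter.limsup (fun n => (avgELcap w cap ρ n : EReal)) Filter.atTop ≤ (t : EReal)} ∩
    Recharge w cap

/-- The (max-)parity objective: the maximal color occurring infinitely often is even. -/
def ParityObj {V : Type} (Ω : V → ℕ) : Set (ℕ → V) :=
  {ρ | ∃ c, Even c ∧ {n | Ω (ρ n) = c}.Infinite ∧ ∀ d, {n | Ω (ρ n) = d}.Infinite → d ≤ c}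

/-!
Against a strategy `σ` winning for `AvgEnergy_L(w, t)`, every consistent play keeps a nonnegative
energy level and, its average energy being at most `t`, has infinitely many *low* prefixes, of
energy level at most `t`. By König's lemma the `σ`-consistent histories with at most `K` low
prefixes therefore have bounded length, for every `K`.

The new strategy plays `σ` on a virtual history of the same last vertex and energy level as the
real one: it appends each new vertex, except that at a low prefix ending in `v` with energy
`e ∈ [0, t]` it jumps to a fixed `σ`-consistent history ending in the configuration `(v, e)`.
There are finitely many configurations, so the virtual histories have boundedly many low
prefixes, hence bounded length `L`, and the energy level stays in `[0, L * max w]`.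
-/

section PrefixList

variable {V : Type}

@[simp]
theorem prefixList_length (ρ : ℕ → V) (n : ℕ) : (prefixList ρ n).length = n + 1 := by
  simp [prefixList]

theorem prefixList_succ (ρ : ℕ → V) (n : ℕ) :
    prefixList ρ (n + 1) = prefixList ρ n ++ [ρ (n + 1)] := by
  simp [prefixList, List.range_succ]

theorem prefixList_take (ρ : ℕ → V) (n m : ℕ) :
    (prefixList ρ n).take (m + 1) = prefixList ρ (min m n) := by
  simp [prefixList, ← List.map_take, List.take_range, Nat.add_min_add_right]

theorem prefixList_getLast? (ρ : ℕ → V) (n : ℕ) :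
    (prefixList ρ n).getLast? = some (ρ n) := by
  simp [prefixList, List.getLast?_range]

theorem prefixList_eq_prefixList_iff {ρ ρ' : ℕ → V} {n : ℕ} :
    prefixList ρ n = prefixList ρ' n ↔ ∀ i ≤ n, ρ i = ρ' i := by
  simp [prefixList, List.map_inj_left]

theorem eq_of_prefixList_eq {ρ ρ' : ℕ → V} {n m : ℕ} (h : prefixList ρ n = prefixList ρ' m) :
    n = m := by
  simpa using congrArg List.length h

end PrefixList

section EnergyLevel

variable {V : Type} (w : V → V → ℤ)

theorem ELl_append_singleton {l : List V} {u : V} (hu : l.getLast? = some u) (v : V) :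
    ELl w (l ++ [v]) = ELl w l + w u v := by
  induction l using ELl.induct with
  | case1 => simp at hu
  | case2 a => simp_all [ELl]
  | case3 a b l ih =>
    simp only [List.getLast?_cons_cons] at hu
    simp only [List.cons_append, ELl] at ih ⊢
    rw [ih hu, add_assoc]

theorem EL_succ (ρ : ℕ → V) (n : ℕ) : EL w ρ (n + 1) = EL w ρ n + w (ρ n) (ρ (n + 1)) :=
  Finset.sum_range_succ _ n

theorem ELl_prefixList (ρ : ℕ → V) (n : ℕ) : ELl w (prefixList ρ n) = EL w ρ n := by
  induction n with
  | zero => rfl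
  | succ n ih => rw [prefixList_succ, ELl_append_singleton w (prefixList_getLast? ρ n), ih, EL_succ]

theorem EL_le_mul {C : ℤ} (hC : ∀ u v, w u v ≤ C) (ρ : ℕ → V) (n : ℕ) :
    EL w ρ n ≤ n * C := by
  simpa [EL] using
    Finset.sum_le_card_nsmul (Finset.range n) _ C fun i _ => hC (ρ i) (ρ (i + 1))

end EnergyLevel

namespace Arena

variable {V : Type} (A : Arena V) (σ : List V → V)

def ConsistentStep (ρ : ℕ → V) (i : ℕ) : Prop :=
  A.E (ρ i) (ρ (i + 1)) ∧ (ρ i ∈ A.V0 → ρ (i + 1) = σ (prefixList ρ i))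

variable {A σ}

theorem play_and_consistentWith_iff {ρ : ℕ → V} :
    A.Play ρ ∧ A.ConsistentWith A.V0 σ ρ ↔ ρ 0 = A.vI ∧ ∀ i, A.ConsistentStep σ ρ i := by
  simp only [Play, ConsistentWith, ConsistentStep, forall_and]
  tauto

theorem consistentStep_congr {ρ ρ' : ℕ → V} {i : ℕ} (h : ∀ j ≤ i + 1, ρ j = ρ' j) :
    A.ConsistentStep σ ρ i ↔ A.ConsistentStep σ ρ' i := by
  have hpre : prefixList ρ i = prefixList ρ' i :=
    prefixList_eq_prefixList_iff.2 fun j hj => h j (by omega)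
  simp only [ConsistentStep, h i (by omega), h (i + 1) le_rfl, hpre]

variable (A σ)

noncomputable def someSucc (v : V) : V := (A.succ v).choose

theorem E_someSucc (v : V) : A.E v (A.someSucc v) := (A.succ v).choose_spec

open Classical in
noncomputable def nextMove (g : List V) : V :=
  if g.getLastD A.vI ∈ A.V0 then σ g else A.someSucc (g.getLastD A.vI)

noncomputable def continuation (ρ₀ : ℕ → V) (n : ℕ) : ℕ → V
  | 0 => ρ₀ 0
  | m + 1 =>
    if m < n then ρ₀ (m + 1)
    else A.nextMove σ (List.ofFn fun i : Fin (m + 1) => continuation ρ₀ n i)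

variable {A σ}

theorem continuation_of_le {ρ₀ : ℕ → V} {n m : ℕ} (h : m ≤ n) :
    A.continuation σ ρ₀ n m = ρ₀ m := by
  cases m with
  | zero => simp [continuation]
  | succ m => simp [continuation, Nat.lt_of_succ_le h]

theorem continuation_succ {ρ₀ : ℕ → V} {n m : ℕ} (h : n ≤ m) :
    A.continuation σ ρ₀ n (m + 1) =
      A.nextMove σ (prefixList (A.continuation σ ρ₀ n) m) := by
  rw [continuation, if_neg (by omega), prefixList]
  congr 1
  exact List.ext_getElem (by simp) fun i _ _ => by
    simp only [List.getElem_ofFn, List.getElem_map, List.getElem_range]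

theorem consistentStep_of_nextMove (hσ : A.IsStrategy A.V0 σ) {ρ : ℕ → V} {m : ℕ}
    (h : ρ (m + 1) = A.nextMove σ (prefixList ρ m)) : A.ConsistentStep σ ρ m := by
  have hlast : (prefixList ρ m).getLastD A.vI = ρ m := by
    simp [List.getLastD_eq_getLast?, prefixList_getLast?]
  obtain ⟨ys, hys⟩ := List.getLast?_eq_some_iff.1 (prefixList_getLast? ρ m)
  rw [nextMove, hlast] at h
  by_cases hm : ρ m ∈ A.V0
  · rw [if_pos hm] at h
    refine ⟨?_, fun _ => h⟩
    rw [h, hys]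
    exact hσ ys (ρ m) hm
  · rw [if_neg hm] at h
    exact ⟨h ▸ A.E_someSucc (ρ m), fun hm' => absurd hm' hm⟩

theorem exists_play_extending (hσ : A.IsStrategy A.V0 σ) {ρ₀ : ℕ → V} {n : ℕ}
    (h0 : ρ₀ 0 = A.vI) (hsteps : ∀ i < n, A.ConsistentStep σ ρ₀ i) :
    ∃ ρ, A.Play ρ ∧ A.ConsistentWith A.V0 σ ρ ∧ ∀ i ≤ n, ρ i = ρ₀ i := by
  set ρ := A.continuation σ ρ₀ n
  have hagree : ∀ i ≤ n, ρ i = ρ₀ i := fun i hi => continuation_of_le hi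
  have hstep : ∀ i, A.ConsistentStep σ ρ i := fun i => by
    rcases lt_or_ge i n with hi | hi
    · exact (consistentStep_congr fun j hj => hagree j (by omega)).2 (hsteps i hi)
    · exact consistentStep_of_nextMove hσ (continuation_succ hi)
  obtain ⟨hρ, hc⟩ :=
    play_and_consistentWith_iff.2 ⟨(hagree 0 (Nat.zero_le n)).trans h0, hstep⟩
  exact ⟨ρ, hρ, hc, hagree⟩

theorem finPrefix_prefixList_iff (hσ : A.IsStrategy A.V0 σ) {ρ : ℕ → V} {n : ℕ} :
    A.FinPrefix A.V0 σ (prefixList ρ n) ↔ ρ 0 = A.vI ∧ ∀ i < n, A.ConsistentStep σ ρ i := by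
  constructor
  · rintro ⟨ρ', m, hρ', hc', heq⟩
    obtain rfl := eq_of_prefixList_eq heq.symm
    have hagree := prefixList_eq_prefixList_iff.1 heq
    obtain ⟨h0, hsteps⟩ := play_and_consistentWith_iff.1 ⟨hρ', hc'⟩
    exact ⟨(hagree 0 (Nat.zero_le _)).trans h0, fun i hi =>
      (consistentStep_congr fun j hj => hagree j (by omega)).2 (hsteps i)⟩
  · rintro ⟨h0, hsteps⟩
    obtain ⟨ρ', hρ', hc', hagree⟩ := exists_play_extending hσ h0 hsteps
    exact ⟨ρ', n, hρ', hc', prefixList_eq_prefixList_iff.2 fun i hi => (hagree i hi).symm⟩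

theorem FinPrefix.take {l : List V} (hl : A.FinPrefix A.V0 σ l) (m : ℕ) :
    A.FinPrefix A.V0 σ (l.take (m + 1)) := by
  obtain ⟨ρ, n, hρ, hc, rfl⟩ := hl
  exact ⟨ρ, min m n, hρ, hc, prefixList_take ρ n m⟩

theorem FinPrefix.append_singleton (hσ : A.IsStrategy A.V0 σ) {l : List V} {u v : V}
    (hl : A.FinPrefix A.V0 σ l) (hu : l.getLast? = some u) (hE : A.E u v)
    (hv : u ∈ A.V0 → v = σ l) : A.FinPrefix A.V0 σ (l ++ [v]) := by
  obtain ⟨ρ, n, hρ, hc, rfl⟩ := hl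
  obtain rfl : ρ n = u := by simpa [prefixList_getLast?] using hu
  set ρ₀ := Function.update ρ (n + 1) v
  have hagree : ∀ i ≤ n, ρ₀ i = ρ i := fun i hi => Function.update_of_ne (by omega) _ _
  have hv₀ : ρ₀ (n + 1) = v := Function.update_self _ _ _
  have hpre : prefixList ρ₀ n = prefixList ρ n := prefixList_eq_prefixList_iff.2 hagree
  have hsnoc : prefixList ρ₀ (n + 1) = prefixList ρ n ++ [v] := by
    rw [prefixList_succ, hpre, hv₀]
  obtain ⟨h0, hsteps⟩ := play_and_consistentWith_iff.1 ⟨hρ, hc⟩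
  rw [← hsnoc, finPrefix_prefixList_iff hσ]
  refine ⟨(hagree 0 (Nat.zero_le n)).trans h0, fun i hi => ?_⟩
  rcases Nat.lt_succ_iff_lt_or_eq.1 hi with hi | rfl
  · exact (consistentStep_congr fun j hj => hagree j (by omega)).2 (hsteps i)
  · simp only [ConsistentStep, hagree i le_rfl, hpre, hv₀]
    exact ⟨hE, hv⟩

theorem WinningStrategy.mono {p : Set V} {Obj Obj' : Set (ℕ → V)} (h : Obj ⊆ Obj')
    (hσ : A.WinningStrategy p Obj σ) : A.WinningStrategy p Obj' σ :=
  ⟨hσ.1, fun ρ hρ hc => h (hσ.2 ρ hρ hc)⟩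

theorem ELl_nonneg_of_finPrefix {w : V → V → ℤ}
    (hσ : A.WinningStrategy A.V0 (EnergyL w) σ) {l : List V} (hl : A.FinPrefix A.V0 σ l) :
    0 ≤ ELl w l := by
  obtain ⟨ρ, n, hρ, hc, rfl⟩ := hl
  rw [ELl_prefixList]
  exact hσ.2 ρ hρ hc n

end Arena

section Konig

variable {V : Type} [Finite V]

-- König's lemma: the lists with arbitrarily long `P`-extensions form an infinite branch.
theorem exists_length_bound_of_forall_prefixList {P : List V → Prop}
    (hP : ∀ l m, P l → P (l.take (m + 1))) (h : ∀ ρ : ℕ → V, ∃ n, ¬ P (prefixList ρ n)) :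
    ∃ L, ∀ l, P l → l.length ≤ L := by
  by_contra! hlong
  set Unbounded : List V → Prop := fun g => ∀ L, ∃ l, P l ∧ g <+: l ∧ L < l.length
  have hext : ∀ g, Unbounded g → ∃ v, Unbounded (g ++ [v]) := by
    intro g hg
    by_contra! hbounded
    choose f hf using fun v => not_forall.1 (hbounded v)
    simp only [not_exists, not_and, not_lt] at hf
    obtain ⟨M, hM⟩ := (Set.finite_range f).bddAbove
    obtain ⟨l, hl, ⟨r, rfl⟩, hlen⟩ := hg (max M g.length)
    obtain ⟨v, r, rfl⟩ := List.exists_cons_of_ne_nil (l := r) (by rintro rfl; simp at hlen)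
    have hfv := hf v _ hl ⟨r, by simp⟩
    have hM' := hM ⟨v, rfl⟩
    omega
  choose next hnext using hext
  let B : ℕ → {g // Unbounded g} :=
    fun n => Nat.rec ⟨[], fun L => (hlong L).imp fun l hl => ⟨hl.1, List.nil_prefix, hl.2⟩⟩
      (fun _ g => ⟨g.1 ++ [next g.1 g.2], hnext g.1 g.2⟩) n
  set ρ : ℕ → V := fun n => next (B n).1 (B n).2
  have hB : ∀ n, prefixList ρ n = (B (n + 1)).1 := by
    intro n
    induction n with
    | zero => rfl
    | succ n ih => rw [prefixList_succ, ih]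
  obtain ⟨n, hn⟩ := h ρ
  obtain ⟨l, hl, hpre, -⟩ := (B (n + 1)).2 0
  rw [← hB, List.prefix_iff_eq_take, prefixList_length] at hpre
  exact hn (hpre ▸ hP l n hl)

end Konig

open Filter Finset

theorem eventually_lt_avg_of_eventually_le {x : ℕ → ℝ} {t c : ℝ} (htc : t < c)
    (hx : ∀ᶠ n in atTop, c ≤ x n) : ∀ᶠ n in atTop, t < (∑ i ∈ range n, x i) / n := by
  have hmin : Tendsto (fun i => min (x i) c) atTop (nhds c) :=
    tendsto_const_nhds.congr' (hx.mono fun n h => (min_eq_right h).symm)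
  filter_upwards [hmin.cesaro.eventually_const_lt htc] with n hn
  calc t < (n : ℝ)⁻¹ * ∑ i ∈ range n, min (x i) c := hn
    _ ≤ (∑ i ∈ range n, x i) / n := by
      rw [inv_mul_eq_div]
      gcongr with i
      exact min_le_left _ _

theorem frequently_EL_le_of_mem_AvgE {V : Type} {w : V → V → ℤ} {t : ℤ} {ρ : ℕ → V}
    (hρ : ρ ∈ AvgE w t) : ∃ᶠ n in atTop, EL w ρ n ≤ t := by
  by_contra h
  have hhigh : ∀ᶠ n in atTop, (t : ℝ) + 1 ≤ EL w ρ n :=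
    (not_frequently.1 h).mono fun n hn => by exact_mod_cast not_le.1 hn
  have hlt : ((t : ℝ) : EReal) < ((t + 1 / 2 : ℝ) : EReal) :=
    EReal.coe_lt_coe_iff.2 (by linarith)
  obtain ⟨n, hsmall, hlarge⟩ := ((eventually_lt_of_limsup_lt (hρ.trans_lt hlt)).and
    (eventually_lt_avg_of_eventually_le (t := t + 1 / 2) (by linarith) hhigh)).exists
  rw [EReal.coe_lt_coe_iff] at hsmall
  exact hsmall.not_gt hlarge

section LowCount

variable {V : Type} (w : V → V → ℤ) (t : ℤ)

def lowCount (l : List V) : ℕ :=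
  #{i ∈ range l.length | ELl w (l.take (i + 1)) ≤ t}

theorem lowCount_take_le (l : List V) (m : ℕ) : lowCount w t (l.take m) ≤ lowCount w t l := by
  apply card_le_card
  intro i
  simp only [mem_filter, mem_range, List.length_take, List.take_take]
  intro ⟨hi, hlow⟩
  exact ⟨by omega, by rwa [min_eq_left (by omega)] at hlow⟩

theorem lowCount_append_singleton {l : List V} {v : V} (h : t < ELl w (l ++ [v])) :
    lowCount w t (l ++ [v]) = lowCount w t l := by
  rw [lowCount, lowCount, List.length_append, List.length_singleton, range_add_one,
    filter_insert, if_neg (by rwa [List.take_of_length_le (by simp), not_le])]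
  congr 1
  refine filter_congr fun i hi => ?_
  rw [List.take_append_of_le_length (by simp at hi; omega)]

theorem lowCount_prefixList (ρ : ℕ → V) (n : ℕ) :
    lowCount w t (prefixList ρ n) = #{i ∈ range (n + 1) | EL w ρ i ≤ t} := by
  rw [lowCount, prefixList_length]
  refine congrArg card (filter_congr fun i hi => ?_)
  rw [prefixList_take, min_eq_left (by simp at hi; omega), ELl_prefixList]

theorem exists_lt_lowCount_prefixList {ρ : ℕ → V} (h : ∃ᶠ n in atTop, EL w ρ n ≤ t)
    (K : ℕ) : ∃ n, K < lowCount w t (prefixList ρ n) := by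
  obtain ⟨s, hs, hcard⟩ :=
    (Nat.frequently_atTop_iff_infinite.1 h).exists_subset_card_eq (K + 1)
  refine ⟨s.sup id, ?_⟩
  rw [lowCount_prefixList, Nat.lt_iff_add_one_le, ← hcard]
  refine card_le_card fun i hi => mem_filter.2 ⟨mem_range.2 ?_, hs hi⟩
  exact Nat.lt_succ_of_le (le_sup (f := id) hi)

end LowCount

namespace Arena

variable {V : Type} (A : Arena V) (σ : List V → V) (w : V → V → ℤ) (t : ℤ)

theorem exists_length_bound [Finite V] (hσ : A.WinningStrategy A.V0 (AvgEnergyL w t) σ)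
    (K : ℕ) : ∃ L, ∀ l, A.FinPrefix A.V0 σ l → lowCount w t l ≤ K → l.length ≤ L := by
  obtain ⟨L, hL⟩ := exists_length_bound_of_forall_prefixList
    (P := fun l => A.FinPrefix A.V0 σ l ∧ lowCount w t l ≤ K)
    (fun l m hl => ⟨hl.1.take m, (lowCount_take_le w t l _).trans hl.2⟩) fun ρ => by
      by_contra! hρ
      have hsteps : ∀ i, A.ConsistentStep σ ρ i := fun i =>
        ((finPrefix_prefixList_iff hσ.1).1 (hρ (i + 1)).1).2 i (Nat.lt_succ_self i)
      obtain ⟨hplay, hc⟩ := play_and_consistentWith_iff.2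
        ⟨((finPrefix_prefixList_iff hσ.1).1 (hρ 0).1).1, hsteps⟩
      obtain ⟨n, hn⟩ := exists_lt_lowCount_prefixList w t
        (frequently_EL_le_of_mem_AvgE (hσ.2 ρ hplay hc).2) K
      exact hn.not_ge (hρ n).2
  exact ⟨L, fun l hl hK => hL l ⟨hl, hK⟩⟩

-- The fallback `[v]` is never used: `canonicalHistory` is only applied to configurations
-- reached by some `σ`-consistent history.
open Classical in
noncomputable def canonicalHistory (v : V) (e : ℤ) : List V :=
  if h : ∃ l, A.FinPrefix A.V0 σ l ∧ l.getLast? = some v ∧ ELl w l = e then h.choose else [v]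

theorem canonicalHistory_getLast? (v : V) (e : ℤ) :
    (A.canonicalHistory σ w v e).getLast? = some v := by
  unfold canonicalHistory
  split_ifs with h
  exacts [h.choose_spec.2.1, rfl]

theorem canonicalHistory_spec {l : List V} {v : V} (hl : A.FinPrefix A.V0 σ l)
    (hv : l.getLast? = some v) :
    A.FinPrefix A.V0 σ (A.canonicalHistory σ w v (ELl w l)) ∧
      ELl w (A.canonicalHistory σ w v (ELl w l)) = ELl w l := by
  have h : ∃ l', A.FinPrefix A.V0 σ l' ∧ l'.getLast? = some v ∧ ELl w l' = ELl w l :=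
    ⟨l, hl, hv, rfl⟩
  rw [canonicalHistory, dif_pos h]
  exact ⟨h.choose_spec.1, h.choose_spec.2.2⟩

theorem exists_lowCount_canonicalHistory_le [Finite V] :
    ∃ K, ∀ v e, 0 ≤ e → e ≤ t → lowCount w t (A.canonicalHistory σ w v e) ≤ K := by
  obtain ⟨K, hK⟩ := ((Set.finite_univ.prod (Set.finite_Icc 0 t)).image
    fun p : V × ℤ => lowCount w t (A.canonicalHistory σ w p.1 p.2)).bddAbove
  exact ⟨K, fun v e h0 ht => hK ⟨(v, e), ⟨trivial, h0, ht⟩, rfl⟩⟩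

noncomputable def shortcut (g : List V) (v : V) : List V :=
  if ELl w (g ++ [v]) ≤ t then A.canonicalHistory σ w v (ELl w (g ++ [v])) else g ++ [v]

noncomputable def shortcutHistory (h : List V) : List V :=
  h.foldl (A.shortcut σ w t) []

noncomputable def shortcutStrategy (h : List V) : V :=
  σ (A.shortcutHistory σ w t h)

theorem shortcut_getLast? (g : List V) (v : V) :
    (A.shortcut σ w t g v).getLast? = some v := by
  unfold shortcut
  split_ifs
  exacts [A.canonicalHistory_getLast? σ w v _, List.getLast?_concat]

theorem shortcutHistory_append_singleton (h : List V) (v : V) :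
    A.shortcutHistory σ w t (h ++ [v]) = A.shortcut σ w t (A.shortcutHistory σ w t h) v := by
  simp [shortcutHistory]

theorem isStrategy_shortcutStrategy (hσ : A.IsStrategy A.V0 σ) :
    A.IsStrategy A.V0 (A.shortcutStrategy σ w t) := by
  intro h v hv
  obtain ⟨g, hg⟩ := List.getLast?_eq_some_iff.1 (A.shortcut_getLast? σ w t _ v)
  rw [shortcutStrategy, shortcutHistory_append_singleton, hg]
  exact hσ g v hv

variable {A σ w t}

theorem shortcut_spec (hσ : A.WinningStrategy A.V0 (EnergyL w) σ) {K : ℕ}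
    (hK : ∀ v e, 0 ≤ e → e ≤ t → lowCount w t (A.canonicalHistory σ w v e) ≤ K)
    {g : List V} {v : V} (hg : A.FinPrefix A.V0 σ (g ++ [v])) (hgK : lowCount w t g ≤ K) :
    A.FinPrefix A.V0 σ (A.shortcut σ w t g v) ∧ ELl w (A.shortcut σ w t g v) = ELl w (g ++ [v]) ∧
      lowCount w t (A.shortcut σ w t g v) ≤ K := by
  unfold shortcut
  split_ifs with hlow
  · obtain ⟨hfin, hEL⟩ := A.canonicalHistory_spec σ w hg List.getLast?_concat
    exact ⟨hfin, hEL, hK _ _ (ELl_nonneg_of_finPrefix hσ hg) hlow⟩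
  · exact ⟨hg, rfl, (lowCount_append_singleton w t (not_le.1 hlow)).trans_le hgK⟩

theorem shortcutHistory_prefixList (hσ : A.WinningStrategy A.V0 (EnergyL w) σ) {K : ℕ}
    (hK : ∀ v e, 0 ≤ e → e ≤ t → lowCount w t (A.canonicalHistory σ w v e) ≤ K) {ρ : ℕ → V}
    (hρ : A.Play ρ) (hc : A.ConsistentWith A.V0 (A.shortcutStrategy σ w t) ρ) (n : ℕ) :
    A.FinPrefix A.V0 σ (A.shortcutHistory σ w t (prefixList ρ n)) ∧
      (A.shortcutHistory σ w t (prefixList ρ n)).getLast? = some (ρ n) ∧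
      ELl w (A.shortcutHistory σ w t (prefixList ρ n)) = EL w ρ n ∧
      lowCount w t (A.shortcutHistory σ w t (prefixList ρ n)) ≤ K := by
  induction n with
  | zero =>
    have hfin : A.FinPrefix A.V0 σ ([] ++ [ρ 0]) :=
      (finPrefix_prefixList_iff hσ.1).2 ⟨hρ.1, fun i hi => (Nat.not_lt_zero i hi).elim⟩
    obtain ⟨h1, h2, h3⟩ := shortcut_spec hσ hK hfin (Nat.zero_le K)
    exact ⟨h1, A.shortcut_getLast? σ w t _ _, h2, h3⟩
  | succ n ih =>
    obtain ⟨hfin, hlast, hEL, hlow⟩ := ih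
    have hfin' := hfin.append_singleton hσ.1 hlast (hρ.2 n) (hc n)
    obtain ⟨h1, h2, h3⟩ := shortcut_spec hσ hK hfin' hlow
    rw [prefixList_succ, shortcutHistory_append_singleton]
    refine ⟨h1, A.shortcut_getLast? σ w t _ _, ?_, h3⟩
    rw [h2, ELl_append_singleton w hlast, hEL, EL_succ]

end Arena

/-- From a winning strategy for the lower-bounded average-energy
objective one obtains a capacity and a winning strategy for the lower- and
upper-bounded energy objective. -/
theorem exists_cap_of_winning_avgEnergyL {V : Type} [Fintype V] (A : Arena V)
    (w : V → V → ℤ) (t : ℕ) (σ : List V → V)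
    (hσ : A.WinningStrategy A.V0 (AvgEnergyL w (t : ℝ)) σ) :
    ∃ (cap : ℕ) (σ' : List V → V), A.WinningStrategy A.V0 (EnergyLU w cap) σ' := by
  replace hσ : A.WinningStrategy A.V0 (AvgEnergyL w ((t : ℤ) : ℝ)) σ := by simpa using hσ
  have hσE := hσ.mono Set.inter_subset_left
  obtain ⟨K, hK⟩ := A.exists_lowCount_canonicalHistory_le σ w t
  obtain ⟨L, hL⟩ := A.exists_length_bound σ w t hσ K
  obtain ⟨C, hC⟩ := (Set.finite_range fun p : V × V => w p.1 p.2).bddAbove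
  refine ⟨L * C.toNat, A.shortcutStrategy σ w t, A.isStrategy_shortcutStrategy σ w t hσ.1,
    fun ρ hρ hc n => ?_⟩
  obtain ⟨hfin, -, hEL, hlow⟩ := Arena.shortcutHistory_prefixList hσE hK hρ hc n
  have hlen := hL _ hfin hlow
  obtain ⟨ρ', m, hρ', hc', heq⟩ := hfin
  rw [heq, prefixList_length] at hlen
  rw [← hEL, heq, ELl_prefixList]
  refine ⟨hσE.2 ρ' hρ' hc' m, ?_⟩
  calc EL w ρ' m ≤ m * C := EL_le_mul w (fun u v => hC ⟨(u, v), rfl⟩) ρ' m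
    _ ≤ m * C.toNat := by gcongr; exact Int.self_le_toNat C
    _ ≤ ((L * C.toNat : ℕ) : ℤ) := by push_cast; gcongr; omega
end

section
/- Let A be an arena with recharge weight function w, cap ∈ ℕ, t ∈ ℕ; let M be the memory structure with states {0,…,cap} ∪ {⊥}, initial state cap, Upd(⊥,e) = ⊥, Upd(c,(v,v')) = cap if (v,v') is labelled R, = c + w(v,v') if c + w(v,v') ≥ 0, = ⊥ otherwise; and let w' on A×M be given by w'((v,c),(v',m)) = c for c ∈ {0,…,cap} and w'((v,⊥),(v',⊥)) = t+1. Then for every play ρ of A with extended play ρ' in A×M: ρ ∈ AvgRecharge(w, cap, t) if, and only if, ρ' ∈ MP(w', t). Consequently, (A, AvgRecharge(w, cap, t)) ≤_M (A×M, MP(w', t)). -/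
/-- The memory structure with states `{0, …, cap} ∪ {⊥}` (`⊥` is `none`), initial
state `cap`, that tracks the recharge energy level. -/
def rechargeMem {V : Type} (w : V → V → Option ℤ) (cap : ℕ) :
    Mem V (Option (Fin (cap + 1))) where
  mI := some (Fin.last cap)
  upd := fun m u v =>
    match m with
    | none => none
    | some c =>
      match w u v with
      | none => some (Fin.last cap)
      | some k =>
        if h : 0 ≤ ((c : ℕ) : ℤ) + k ∧ ((c : ℕ) : ℤ) + k ≤ (cap : ℤ) then
          some ⟨(((c : ℕ) : ℤ) + k).toNat, by omega⟩
        else none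

/-- The weight function `w'` on the expanded arena: the weight of an edge is the
energy level stored in the memory component of its source, and `t + 1` at `⊥`. -/
def rechargeMPweight {V : Type} (cap t : ℕ) :
    (V × Option (Fin (cap + 1))) → (V × Option (Fin (cap + 1))) → ℤ :=
  fun p _ =>
    match p.2 with
    | some c => ((c : ℕ) : ℤ)
    | none => (t : ℤ) + 1

/-!
While the recharge energy level stays nonnegative it also stays at most `cap` (weights are
non-positive), so the memory of `rechargeMem` stores exactly that level, `w'` weighs the `i`-th
edge of the extended play by `ELcap w cap ρ i`, and the mean payoff of the extended play is the
average recharge energy level. Once the level drops below zero the memory is stuck in `⊥`, every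
later edge weighs `t + 1`, and the mean payoff tends to `t + 1 > t`.
-/

open Filter Topology

theorem Mem.track_succ {V M : Type} (mem : Mem V M) (ρ : ℕ → V) (n : ℕ) :
    mem.track ρ (n + 1) = mem.upd (mem.track ρ n) (ρ n) (ρ (n + 1)) :=
  rfl

section RechargeMemory

variable {V : Type} {w : V → V → Option ℤ} {cap : ℕ} {ρ : ℕ → V}

theorem ELcap_le_cap {A : Arena V} (hw : RechargeWeights A w) (hρ : A.Play ρ) (n : ℕ) :
    ELcap w cap ρ n ≤ cap := by
  induction n with
  | zero => simp [ELcap]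
  | succ n ih =>
    rcases hwn : w (ρ n) (ρ (n + 1)) with _ | k
    · simp [ELcap, hwn]
    · have hk := hw _ _ (hρ.2 n) k hwn
      simp only [ELcap, hwn]
      omega

theorem ELcap_eq_of_track_rechargeMem_eq_some {n : ℕ} {c : Fin (cap + 1)}
    (h : (rechargeMem w cap).track ρ n = some c) : ELcap w cap ρ n = c := by
  induction n generalizing c with
  | zero =>
    cases h
    simp [ELcap]
  | succ n ih =>
    rw [Mem.track_succ] at h
    rcases hm : (rechargeMem w cap).track ρ n with _ | c₀
    · rw [hm] at h
      cases h
    · have hc₀ := ih hm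
      rw [hm] at h
      rcases hwn : w (ρ n) (ρ (n + 1)) with _ | k
      · simp only [rechargeMem, hwn, Option.some.injEq] at h
        simp [ELcap, hwn, ← h]
      · simp only [rechargeMem, hwn] at h
        split_ifs at h with hk
        cases h
        simp only [ELcap, hwn]
        omega

theorem track_rechargeMem_ne_none {A : Arena V} (hw : RechargeWeights A w) (hρ : A.Play ρ)
    {n : ℕ} (h : ∀ i ≤ n, 0 ≤ ELcap w cap ρ i) : (rechargeMem w cap).track ρ n ≠ none := by
  induction n with
  | zero => simp [Mem.track, rechargeMem]
  | succ n ih =>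
    obtain ⟨c, hc⟩ := Option.ne_none_iff_exists'.mp (ih fun i hi => h i (by omega))
    have hc_eq := ELcap_eq_of_track_rechargeMem_eq_some hc
    have hnonneg := h (n + 1) le_rfl
    have hle := ELcap_le_cap (cap := cap) hw hρ (n + 1)
    rw [Mem.track_succ, hc]
    rcases hwn : w (ρ n) (ρ (n + 1)) with _ | k
    · simp [rechargeMem, hwn]
    · simp only [ELcap, hwn] at hnonneg hle
      simp only [rechargeMem, hwn]
      rw [dif_pos (by omega)]
      simp

theorem track_rechargeMem_eq_none {i n : ℕ} (hneg : ELcap w cap ρ i < 0) (hin : i ≤ n) :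
    (rechargeMem w cap).track ρ n = none := by
  induction n, hin using Nat.le_induction with
  | base =>
    by_contra h
    obtain ⟨c, hc⟩ := Option.ne_none_iff_exists'.mp h
    have := ELcap_eq_of_track_rechargeMem_eq_some hc
    omega
  | succ n _ ih => rw [Mem.track_succ, ih]; rfl

theorem EL_extendPlay_rechargeMem_of_mem_recharge {A : Arena V} (hw : RechargeWeights A w)
    (hρ : A.Play ρ) (hrec : ρ ∈ Recharge w cap) (t n : ℕ) :
    EL (rechargeMPweight cap t) (extendPlay (rechargeMem w cap) ρ) n =
      ∑ i ∈ Finset.range n, ELcap w cap ρ i := by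
  refine Finset.sum_congr rfl fun i _ => ?_
  obtain ⟨c, hc⟩ := Option.ne_none_iff_exists'.mp
    (track_rechargeMem_ne_none (n := i) hw hρ fun j _ => hrec j)
  simp [rechargeMPweight, extendPlay, hc, ELcap_eq_of_track_rechargeMem_eq_some hc]

theorem avgELcap_eq_EL_extendPlay_div {A : Arena V} (hw : RechargeWeights A w) (hρ : A.Play ρ)
    (hrec : ρ ∈ Recharge w cap) (t n : ℕ) :
    avgELcap w cap ρ n =
      (EL (rechargeMPweight cap t) (extendPlay (rechargeMem w cap) ρ) n : ℝ) / n := by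
  rw [avgELcap, EL_extendPlay_rechargeMem_of_mem_recharge hw hρ hrec, Int.cast_sum]

theorem tendsto_EL_extendPlay_rechargeMem_div_of_neg {N : ℕ} (hneg : ELcap w cap ρ N < 0)
    (t : ℕ) :
    Tendsto (fun n : ℕ =>
        (EL (rechargeMPweight cap t) (extendPlay (rechargeMem w cap) ρ) n : ℝ) / n)
      atTop (𝓝 ((t : ℝ) + 1)) := by
  have hweight : ∀ᶠ i in atTop,
      ((rechargeMPweight cap t (extendPlay (rechargeMem w cap) ρ i)
        (extendPlay (rechargeMem w cap) ρ (i + 1)) : ℤ) : ℝ) = (t : ℝ) + 1 := by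
    filter_upwards [eventually_ge_atTop N] with i hi
    simp [rechargeMPweight, extendPlay, track_rechargeMem_eq_none hneg hi]
  refine (tendsto_nhds_of_eventually_eq hweight).cesaro.congr fun n => ?_
  simp [EL, div_eq_inv_mul]

theorem extendPlay_rechargeMem_not_mem_MP_of_neg {N : ℕ} (hneg : ELcap w cap ρ N < 0)
    (t : ℕ) : extendPlay (rechargeMem w cap) ρ ∉ MP (rechargeMPweight cap t) t := by
  intro hMP
  have hlimsup := ((continuous_coe_real_ereal.tendsto _).comp
    (tendsto_EL_extendPlay_rechargeMem_div_of_neg hneg t)).limsup_eq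
  have : (((t : ℝ) + 1 : ℝ) : EReal) ≤ (t : ℝ) := by
    rw [← hlimsup]
    exact hMP
  rw [EReal.coe_le_coe_iff] at this
  linarith

end RechargeMemory

theorem avgRecharge_reduces_to_MP_general {V : Type} (A : Arena V)
    (w : V → V → Option ℤ) (hw : RechargeWeights A w) (cap t : ℕ) :
    (∀ ρ : ℕ → V, A.Play ρ →
      (ρ ∈ AvgRecharge w cap (t : ℝ) ↔
        extendPlay (rechargeMem w cap) ρ ∈ MP (rechargeMPweight cap t) (t : ℝ))) ∧
    Reduces A (rechargeMem w cap) (AvgRecharge w cap (t : ℝ))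
      (MP (rechargeMPweight cap t) (t : ℝ)) := by
  have key : ∀ ρ : ℕ → V, A.Play ρ →
      (ρ ∈ AvgRecharge w cap (t : ℝ) ↔
        extendPlay (rechargeMem w cap) ρ ∈ MP (rechargeMPweight cap t) (t : ℝ)) := by
    intro ρ hρ
    by_cases hrec : ρ ∈ Recharge w cap
    · simp only [AvgRecharge, MP, Set.mem_inter_iff, Set.mem_ofPred_eq, hrec, and_true,
        avgELcap_eq_EL_extendPlay_div hw hρ hrec t, EReal.coe_div]
    · obtain ⟨N, hneg⟩ : ∃ N, ELcap w cap ρ N < 0 := by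
        simpa [Recharge] using hrec
      exact iff_of_false (fun h => hrec h.2) (extendPlay_rechargeMem_not_mem_MP_of_neg hneg t)
  exact ⟨key, key⟩

/-- A play satisfies the average-bounded recharge objective iff its
extended play satisfies the mean-payoff objective for `w'`; consequently
`(A, AvgRecharge(w,cap,t)) ≤_M (A×M, MP(w',t))`. -/
theorem avgRecharge_reduces_to_MP {V : Type} [Fintype V] (A : Arena V)
    (w : V → V → Option ℤ) (hw : RechargeWeights A w) (cap t : ℕ) :
    (∀ ρ : ℕ → V, A.Play ρ →
      (ρ ∈ AvgRecharge w cap (t : ℝ) ↔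
        extendPlay (rechargeMem w cap) ρ ∈ MP (rechargeMPweight cap t) (t : ℝ))) ∧
    Reduces A (rechargeMem w cap) (AvgRecharge w cap (t : ℝ))
      (MP (rechargeMPweight cap t) (t : ℝ)) :=
  avgRecharge_reduces_to_MP_general A w hw cap t
end
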